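/- As t → 0⁺, t²·φ_eff(t) converges to 1/(6π); that is, φ_eff(t) ∼ (1/(2t²))·∫_{−∞}^∞ V as t → 0, where the even extension of V satisfies ∫_{−∞}^∞ V = 1/(3π). -/

import Mathlib

/-!
With `q = exp (-2πx)`, both `x φ(x) = x² / sinh²(πx)` and `V(x)` expand on `(0, ∞)` into series
in powers of `q` with nonnegative terms, and the `n`-th term of either integrates to `1 / (π³ n²)`;
by `ζ(2) = π² / 6` both integrals over `(0, ∞)` equal `1 / (6π)`.

Writing `g(x) = x φ(x)`, we have `t² φ_eff(t) = t Σₖ g(kt)`, a Riemann sum of `g`. Since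
`sinh y / y` increases, `g` decreases on `(0, ∞)` and is bounded by `1 / π²`, so the integral test
traps the Riemann sum between `∫₀^∞ g - t / π²` and `∫₀^∞ g + t / π²`.
-/

open Real Filter MeasureTheory

/-- The wall-interaction force `φ(s) = s / sinh²(πs)`. -/
noncomputable def phi (s : ℝ) : ℝ := s / (Real.sinh (Real.pi * s)) ^ 2

/-- The even extension to `ℝ` of the wall-interaction energy
`V(s) = (1/π)·s·coth(πs) − (1/π²)·log(2·sinh(πs))` (`s > 0`). -/
noncomputable def Vext (s : ℝ) : ℝ :=
  (1 / Real.pi) * |s| * (Real.cosh (Real.pi * |s|) / Real.sinh (Real.pi * |s|))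
    - (1 / Real.pi ^ 2) * Real.log (2 * Real.sinh (Real.pi * |s|))

open Set Topology
open scoped Nat

lemma integral_pow_mul_exp_neg_mul_Ioi (k : ℕ) {c : ℝ} (hc : 0 < c) :
    ∫ x in Ioi 0, x ^ k * exp (-(c * x)) = k ! / c ^ (k + 1) := by
  have h := integral_rpow_mul_exp_neg_mul_Ioi (a := k + 1) (by positivity) hc
  rw [add_sub_cancel_right, Gamma_nat_eq_factorial, ← Nat.cast_succ, rpow_natCast,
    one_div, inv_pow, ← div_eq_inv_mul] at h
  simpa only [rpow_natCast] using h

lemma integrableOn_pow_mul_exp_neg_mul_Ioi (k : ℕ) {c : ℝ} (hc : 0 < c) :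
    IntegrableOn (fun x => x ^ k * exp (-(c * x))) (Ioi 0) :=
  Integrable.of_integral_ne_zero (by rw [integral_pow_mul_exp_neg_mul_Ioi k hc]; positivity)

namespace Real

lemma two_mul_sinh_eq (y : ℝ) : 2 * sinh y = exp y * (1 - exp (-(2 * y))) := by
  rw [sinh_eq, mul_sub, ← exp_add]; ring_nf

lemma two_mul_cosh_eq (y : ℝ) : 2 * cosh y = exp y * (1 + exp (-(2 * y))) := by
  rw [cosh_eq, mul_add, ← exp_add]; ring_nf

lemma exp_sq_mul_exp_neg_two_mul (y : ℝ) : exp y ^ 2 * exp (-(2 * y)) = 1 := by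
  rw [← exp_nat_mul, ← exp_add]; ring_nf; exact exp_zero

lemma exp_neg_two_mul_pow (y : ℝ) (n : ℕ) : exp (-(2 * y)) ^ n = exp (-(2 * n * y)) := by
  rw [← exp_nat_mul]; ring_nf

lemma convexOn_sinh : ConvexOn ℝ (Ici 0) sinh := by
  refine MonotoneOn.convexOn_of_deriv (convex_Ici 0) continuous_sinh.continuousOn
    differentiable_sinh.differentiableOn ?_
  rw [deriv_sinh, interior_Ici]
  exact cosh_strictMonoOn.monotoneOn.mono Ioi_subset_Ici_self

lemma monotoneOn_sinh_div_self : MonotoneOn (fun y => sinh y / y) (Ioi 0) :=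
  fun a ha b hb hab => by
    simpa using convexOn_sinh.secant_mono (a := 0) self_mem_Ici (mem_Ici.2 ha.le)
      (mem_Ici.2 hb.le) ha.ne' hb.ne' hab

variable {y : ℝ}

lemma exp_neg_two_mul_lt_one (hy : 0 < y) : exp (-(2 * y)) < 1 :=
  exp_lt_one_iff.2 (by linarith)

lemma hasSum_inv_sinh_sq (hy : 0 < y) :
    HasSum (fun n : ℕ => 4 * (n + 1) * exp (-(2 * (n + 1) * y))) (sinh y ^ 2)⁻¹ := by
  have hq : ‖exp (-(2 * y))‖ < 1 := by
    rw [norm_of_nonneg (exp_pos _).le]; exact exp_neg_two_mul_lt_one hy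
  have h0 := hasSum_coe_mul_geometric_of_norm_lt_one hq
  have h := ((hasSum_nat_add_iff' 1).2 h0).mul_left (4 : ℝ)
  simp only [Finset.sum_range_one, Nat.cast_zero, zero_mul, sub_zero, exp_neg_two_mul_pow] at h
  have hs : sinh y ≠ 0 := (sinh_pos_iff.2 hy).ne'
  have hq1 : 1 - exp (-(2 * y)) ≠ 0 := (sub_pos.2 (exp_neg_two_mul_lt_one hy)).ne'
  have hval : (sinh y ^ 2)⁻¹ = 4 * (exp (-(2 * y)) / (1 - exp (-(2 * y))) ^ 2) := by
    field_simp
    linear_combination (-exp (-(2 * y)) * (2 * sinh y + exp y * (1 - exp (-(2 * y)))))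
      * two_mul_sinh_eq y - (1 - exp (-(2 * y))) ^ 2 * exp_sq_mul_exp_neg_two_mul y
  rw [hval]
  exact h.congr_fun fun n => by push_cast; ring

lemma hasSum_cosh_div_sinh_sub_one (hy : 0 < y) :
    HasSum (fun n : ℕ => 2 * exp (-(2 * (n + 1) * y))) (cosh y / sinh y - 1) := by
  have h0 := hasSum_geometric_of_lt_one (exp_pos (-(2 * y))).le (exp_neg_two_mul_lt_one hy)
  have h := h0.mul_left (2 * exp (-(2 * y)))
  have hs : sinh y ≠ 0 := (sinh_pos_iff.2 hy).ne'
  have hq1 : 1 - exp (-(2 * y)) ≠ 0 := (sub_pos.2 (exp_neg_two_mul_lt_one hy)).ne'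
  have hval : cosh y / sinh y - 1 = 2 * exp (-(2 * y)) * (1 - exp (-(2 * y)))⁻¹ := by
    rw [div_sub_one hs, ← mul_div_mul_left _ _ (two_ne_zero' ℝ), mul_sub, two_mul_cosh_eq,
      two_mul_sinh_eq]
    field_simp
    ring
  rw [hval]
  refine h.congr_fun fun n => ?_
  rw [exp_neg_two_mul_pow, mul_assoc (2 : ℝ) (exp _), ← exp_add]
  ring_nf

lemma hasSum_sub_log_two_mul_sinh (hy : 0 < y) :
    HasSum (fun n : ℕ => exp (-(2 * (n + 1) * y)) / (n + 1)) (y - log (2 * sinh y)) := by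
  have h := hasSum_pow_div_log_of_abs_lt_one (x := exp (-(2 * y)))
    (by rw [abs_of_pos (exp_pos _)]; exact exp_neg_two_mul_lt_one hy)
  have hq1 : 1 - exp (-(2 * y)) ≠ 0 := (sub_pos.2 (exp_neg_two_mul_lt_one hy)).ne'
  rw [two_mul_sinh_eq, log_mul (exp_pos y).ne' hq1, log_exp, sub_add_cancel_left]
  refine h.congr_fun fun n => ?_
  rw [exp_neg_two_mul_pow]
  push_cast
  ring_nf

end Real

lemma integral_eq_of_hasSum_of_nonneg {α : Type*} [MeasurableSpace α] {μ : Measure α}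
    {f : α → ℝ} {F : ℕ → α → ℝ} {A : ℝ}
    (hf : ∀ᵐ x ∂μ, HasSum (fun n => F n x) (f x)) (hF : ∀ n, 0 ≤ᵐ[μ] F n)
    (hint : ∀ n, Integrable (F n) μ) (hA : HasSum (fun n => ∫ x, F n x ∂μ) A) :
    ∫ x, f x ∂μ = A := by
  have hnorm : (fun n => ∫ x, ‖F n x‖ ∂μ) = fun n => ∫ x, F n x ∂μ := funext fun n =>
    integral_congr_ae ((hF n).mono fun x hx => Real.norm_of_nonneg hx)
  rw [integral_congr_ae (hf.mono fun x hx => hx.tsum_eq.symm)]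
  exact (hasSum_integral_of_summable_integral_norm hint (hnorm ▸ hA.summable)).unique hA

lemma hasSum_one_div_pi_cube_mul_sq :
    HasSum (fun n : ℕ => 1 / (π ^ 3 * ((n : ℝ) + 1) ^ 2)) (1 / (6 * π)) := by
  have h := ((hasSum_nat_add_iff' 1).2 hasSum_zeta_two).mul_left (1 / π ^ 3)
  have hval : 1 / (6 * π) = 1 / π ^ 3 * (π ^ 2 / 6 - ∑ i ∈ Finset.range 1, 1 / (i : ℝ) ^ 2) := by
    simp only [Finset.sum_range_one]; field_simp; norm_num
  rw [hval]
  exact h.congr_fun fun n => by push_cast; field_simp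

lemma hasSum_mul_phi {x : ℝ} (hx : 0 < x) :
    HasSum (fun n : ℕ => 4 * (n + 1) * (x ^ 2 * exp (-(2 * π * (n + 1) * x)))) (x * phi x) := by
  have h := (hasSum_inv_sinh_sq (mul_pos pi_pos hx)).mul_left (x ^ 2)
  rw [phi, ← mul_div_assoc, ← sq, div_eq_mul_inv]
  exact h.congr_fun fun n => by ring_nf

lemma hasSum_Vext {x : ℝ} (hx : 0 < x) :
    HasSum (fun n : ℕ => (2 / π * x + 1 / (π ^ 2 * (n + 1))) * exp (-(2 * π * (n + 1) * x)))
      (Vext x) := by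
  have h := ((hasSum_cosh_div_sinh_sub_one (mul_pos pi_pos hx)).mul_left (x / π)).add
    ((hasSum_sub_log_two_mul_sinh (mul_pos pi_pos hx)).mul_left (1 / π ^ 2))
  have hval : Vext x = x / π * (cosh (π * x) / sinh (π * x) - 1)
      + 1 / π ^ 2 * (π * x - log (2 * sinh (π * x))) := by
    rw [Vext, abs_of_pos hx]
    field_simp
    ring
  rw [hval]
  exact h.congr_fun fun n => by field_simp

lemma integral_mul_phi_Ioi : ∫ x in Ioi 0, x * phi x = 1 / (6 * π) := by
  have hc (n : ℕ) : 0 < 2 * π * (n + 1) := by positivity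
  refine integral_eq_of_hasSum_of_nonneg
    (F := fun (n : ℕ) x => 4 * (n + 1) * (x ^ 2 * exp (-(2 * π * (n + 1) * x))))
    (ae_restrict_of_forall_mem measurableSet_Ioi fun x hx => hasSum_mul_phi hx)
    (fun n => ae_of_all _ fun x => by positivity)
    (fun n => (integrableOn_pow_mul_exp_neg_mul_Ioi 2 (hc n)).const_mul _) ?_
  refine hasSum_one_div_pi_cube_mul_sq.congr_fun fun n => ?_
  rw [integral_const_mul, integral_pow_mul_exp_neg_mul_Ioi 2 (hc n)]
  field_simp
  norm_num
  ring

lemma integral_Vext_Ioi : ∫ x in Ioi 0, Vext x = 1 / (6 * π) := by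
  have hc (n : ℕ) : 0 < 2 * π * (n + 1) := by positivity
  have hterm (n : ℕ) :
      (fun x : ℝ => (2 / π * x + 1 / (π ^ 2 * (n + 1))) * exp (-(2 * π * (n + 1) * x)))
      = fun x => 2 / π * (x ^ 1 * exp (-(2 * π * (n + 1) * x)))
        + 1 / (π ^ 2 * (n + 1)) * (x ^ 0 * exp (-(2 * π * (n + 1) * x))) := by
    ext x; ring
  refine integral_eq_of_hasSum_of_nonneg
    (ae_restrict_of_forall_mem measurableSet_Ioi fun x hx => hasSum_Vext hx)
    (fun n => ae_restrict_of_forall_mem measurableSet_Ioi fun x (hx : 0 < x) => by positivity)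
    (fun n => by
      rw [hterm]
      exact ((integrableOn_pow_mul_exp_neg_mul_Ioi 1 (hc n)).const_mul _).add
        ((integrableOn_pow_mul_exp_neg_mul_Ioi 0 (hc n)).const_mul _)) ?_
  refine hasSum_one_div_pi_cube_mul_sq.congr_fun fun n => ?_
  rw [hterm, integral_add ((integrableOn_pow_mul_exp_neg_mul_Ioi 1 (hc n)).const_mul _)
    ((integrableOn_pow_mul_exp_neg_mul_Ioi 0 (hc n)).const_mul _), integral_const_mul,
    integral_const_mul, integral_pow_mul_exp_neg_mul_Ioi 1 (hc n),
    integral_pow_mul_exp_neg_mul_Ioi 0 (hc n)]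
  field_simp
  norm_num
  ring

lemma mul_phi_eq (x : ℝ) : x * phi x = (π ^ 2 * (sinh (π * x) / (π * x)) ^ 2)⁻¹ := by
  rw [phi, mul_div_assoc', ← sq, div_pow, mul_pow, mul_div_assoc',
    mul_div_mul_left _ _ (by positivity), inv_div]

lemma antitoneOn_mul_phi : AntitoneOn (fun x => x * phi x) (Ioi 0) := fun a ha b hb hab => by
  have ha' : 0 < π * a := mul_pos pi_pos ha
  have hmono := monotoneOn_sinh_div_self ha' (mul_pos pi_pos hb) (by gcongr)
  simp only [mul_phi_eq]
  gcongr

lemma mul_phi_le_inv_pi_sq {x : ℝ} (hx : 0 < x) : x * phi x ≤ (π ^ 2)⁻¹ := by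
  have hpx : 0 < π * x := mul_pos pi_pos hx
  rw [mul_phi_eq]
  gcongr
  exact le_mul_of_one_le_right (by positivity)
    (one_le_pow₀ ((one_le_div hpx).2 (self_le_sinh_iff.2 hpx.le)))

namespace AntitoneOn

variable {f : ℝ → ℝ} {t : ℝ}

lemma comp_mul_left_Ici_one (hf : AntitoneOn f (Ioi 0)) (ht : 0 < t) :
    AntitoneOn (fun y => f (t * y)) (Ici 1) := fun a ha b hb hab =>
  hf (mul_pos ht (zero_lt_one.trans_le ha)) (mul_pos ht (zero_lt_one.trans_le hb))
    (by gcongr)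

lemma mul_tsum_mem_Icc_integral_Ioi (hf : AntitoneOn f (Ioi 0)) (hint : IntegrableOn f (Ioi 0))
    (hnn : ∀ x ∈ Ioi 0, 0 ≤ f x) (ht : 0 < t) :
    t * ∑' k : ℕ, f ((k + 1) * t) ∈ Icc (∫ x in Ioi t, f x) (t * f t + ∫ x in Ioi t, f x) := by
  have hanti : AntitoneOn (fun y => f (t * y)) (Ici ((1 : ℕ) : ℝ)) := by
    simpa using hf.comp_mul_left_Ici_one ht
  have hint' : IntegrableOn (fun y => f (t * y)) (Ioi ((1 : ℕ) : ℝ)) := by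
    rw [Nat.cast_one, integrableOn_Ioi_comp_mul_left_iff _ _ ht, mul_one]
    exact hint.mono_set (Ioi_subset_Ioi ht.le)
  have hnn' : ∀ y ∈ Ioi ((1 : ℕ) : ℝ), 0 ≤ f (t * y) := fun y hy =>
    hnn _ (mul_pos ht (by simp at hy; linarith))
  have hsum := hanti.summable_of_integrableOn_Ioi hint' hnn'
  have hscale : t * ∫ y in Ioi 1, f (t * y) = ∫ x in Ioi t, f x := by
    simpa using integral_comp_mul_left_Ioi' f 1 ht
  have lower : ∫ y in Ioi 1, f (t * y) ≤ ∑' k : ℕ, f (t * (k + 1)) := by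
    simpa using hanti.integral_le_tsum_comp_add 1 hsum hnn'
  have upper : ∑' k : ℕ, f (t * (k + 1 + 1)) ≤ ∫ y in Ioi 1, f (t * y) := by
    simpa using hanti.tsum_comp_add_le_integral 1 hint' hnn'
  have hpeel : ∑' k : ℕ, f (t * (k + 1)) = f t + ∑' k : ℕ, f (t * (k + 1 + 1)) := by
    simpa using ((summable_nat_add_iff 1).2 hsum).tsum_eq_zero_add
  simp only [mul_comm _ t]
  rw [← hscale]
  exact ⟨by gcongr, by rw [hpeel, mul_add]; gcongr⟩

end AntitoneOn

lemma integral_Ioi_mem_Icc_of_le_const {f : ℝ → ℝ} {M t : ℝ} (hint : IntegrableOn f (Ioi 0))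
    (hnn : ∀ x ∈ Ioi 0, 0 ≤ f x) (hM : ∀ x ∈ Ioi 0, f x ≤ M) (ht : 0 < t) :
    ∫ x in Ioi t, f x ∈ Icc ((∫ x in Ioi 0, f x) - t * M) (∫ x in Ioi 0, f x) := by
  have hsplit : ∫ x in Ioi 0, f x = (∫ x in Ioc 0 t, f x) + ∫ x in Ioi t, f x := by
    rw [← Ioc_union_Ioi_eq_Ioi ht.le, setIntegral_union Ioc_disjoint_Ioi_same measurableSet_Ioi
      (hint.mono_set Ioc_subset_Ioi_self) (hint.mono_set (Ioi_subset_Ioi ht.le))]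
  have hhead : ∫ x in Ioc 0 t, f x ∈ Icc 0 (t * M) := by
    refine ⟨setIntegral_nonneg measurableSet_Ioc fun x hx => hnn x hx.1, ?_⟩
    have := norm_setIntegral_le_of_norm_le_const (μ := volume) (f := f) (s := Ioc 0 t)
      (C := M) measure_Ioc_lt_top fun x hx => by
        rw [Real.norm_of_nonneg (hnn x hx.1)]; exact hM x hx.1
    rw [Real.volume_real_Ioc_of_le ht.le, sub_zero, mul_comm] at this
    exact (le_abs_self _).trans this
  constructor <;> linarith [hhead.1, hhead.2]

theorem tendsto_mul_tsum_of_antitoneOn {f : ℝ → ℝ} {M : ℝ} (hf : AntitoneOn f (Ioi 0))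
    (hint : IntegrableOn f (Ioi 0)) (hnn : ∀ x ∈ Ioi 0, 0 ≤ f x) (hM : ∀ x ∈ Ioi 0, f x ≤ M) :
    Tendsto (fun t => t * ∑' k : ℕ, f ((k + 1) * t)) (𝓝[>] 0) (𝓝 (∫ x in Ioi 0, f x)) := by
  have hlim : ∀ c : ℝ, Tendsto (fun t => (∫ x in Ioi 0, f x) + t * c) (𝓝[>] 0)
      (𝓝 (∫ x in Ioi 0, f x)) := fun c =>
    ((by fun_prop : Continuous fun t : ℝ => (∫ x in Ioi 0, f x) + t * c).tendsto' 0 _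
      (by simp)).mono_left nhdsWithin_le_nhds
  refine tendsto_of_tendsto_of_tendsto_of_le_of_le' (hlim (-M)) (hlim M) ?_ ?_ <;>
    filter_upwards [self_mem_nhdsWithin] with t ht
  all_goals
    have hsum := hf.mul_tsum_mem_Icc_integral_Ioi hint hnn ht
    have htail := integral_Ioi_mem_Icc_of_le_const hint hnn hM ht
    have hft := mul_le_mul_of_nonneg_left (hM t ht) ht.le
    nlinarith [hsum.1, hsum.2, htail.1, htail.2]

/-- As `t → 0⁺`, `t²·φ_eff(t) → 1/(6π)`, i.e. `φ_eff(t) ∼ (1/(2t²))·∫_{−∞}^∞ V` as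
`t → 0`, where the even extension of `V` satisfies `∫_{−∞}^∞ V = 1/(3π)`. -/
theorem stmt10 :
    Tendsto (fun t : ℝ => t ^ 2 * ∑' k : ℕ, ((k : ℝ) + 1) * phi (((k : ℝ) + 1) * t))
      (nhdsWithin 0 (Set.Ioi 0)) (nhds (1 / (6 * Real.pi))) ∧
    (∫ s : ℝ, Vext s) = 1 / (3 * Real.pi) := by
  have hnn : ∀ x ∈ Ioi (0 : ℝ), 0 ≤ x * phi x := fun x _ => by rw [mul_phi_eq]; positivity
  have hint : IntegrableOn (fun x => x * phi x) (Ioi 0) :=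
    Integrable.of_integral_ne_zero (by rw [integral_mul_phi_Ioi]; positivity)
  constructor
  · have h := tendsto_mul_tsum_of_antitoneOn antitoneOn_mul_phi hint hnn
      fun x hx => mul_phi_le_inv_pi_sq hx
    rw [integral_mul_phi_Ioi] at h
    refine h.congr fun t => ?_
    rw [← tsum_mul_left, ← tsum_mul_left]
    exact tsum_congr fun k => by ring
  · have habs : (fun s => Vext s) = fun s => Vext |s| := funext fun s => by
      simp only [Vext, abs_abs]
    rw [habs, integral_comp_abs, integral_Vext_Ioi]
    field_simp
    norm_num
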